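/- Let Γ be a strongly regular graph with parameters (v, k, λ, μ) whose complement is connected, and suppose Γ is type II: there exist integers r and s with r ≥ s, s < 0, r + s = λ − μ and r·s = μ − k. Let C(x, y) = x(x+1)(v−y) − 2xy(k−y+1) + y(y−1)(λ−y+2) be the clique adjacency polynomial of Γ. Suppose that 0 < frac(−k/s) < 1 − (r² + r)/(v − 2k + λ), where frac(a) = a − ⌊a⌋ and quantities are computed in ℝ. Then C(⌊−μ/s⌋, ⌊1 − k/s⌋) < 0. -/

import Mathlib

/-!
Write `-k/s = n + f` with `n = ⌊-k/s⌋` and `f = frac(-k/s)`; since `μ = k + rs`, the two clique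
parameters are `⌊-μ/s⌋ = n - r` and `⌊1 - k/s⌋ = n + 1`. In terms of the eigenvalues the
relation `k(k - λ - 1) = (v - k - 1)μ` reads `(v - 2k + λ)μ = rs(r+1)(s+1)`, and modulo this
relation `C(n - r, n + 1)·μ = s·r(r+1)·f·(r - n - f - (1 - f)(s + 1))`. Co-connectedness makes
`v - 2k + λ`, the `μ`-parameter of the complement, positive; together with `f > 0` (which
forces `μ > 0`) this gives `r(r+1) > 0` and `s < -1`, and the upper bound on `f` is exactly
what makes the last factor positive.
-/

def cliqueAdjPolyInt (v k lam : ℤ) (x y : ℤ) : ℤ :=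
  x * (x + 1) * (v - y) - 2 * x * y * (k - y + 1) + y * (y - 1) * (lam - y + 2)

def cliqueAdjPoly {R : Type*} [CommRing R] (v k l x y : R) : R :=
  x * (x + 1) * (v - y) - 2 * x * y * (k - y + 1) + y * (y - 1) * (l - y + 2)

@[simp, norm_cast]
lemma Int.cast_cliqueAdjPolyInt {R : Type*} [CommRing R] (v k l x y : ℤ) :
    ((cliqueAdjPolyInt v k l x y : ℤ) : R) = cliqueAdjPoly (v : R) k l x y := by
  simp [cliqueAdjPolyInt, cliqueAdjPoly]

namespace SimpleGraph

variable {V : Type*} {G : SimpleGraph V}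

theorem Connected.exists_adj_adj_not_adj_of_ne_top (hG : G.Connected) (ht : G ≠ ⊤) :
    ∃ x a b, G.Adj x a ∧ G.Adj a b ∧ ¬G.Adj x b ∧ x ≠ b := by
  obtain ⟨u, w, hne, hnadj⟩ := ne_top_iff_exists_not_adj.mp ht
  obtain ⟨p, hp⟩ := hG.exists_walk_length_eq_dist u w
  exact p.exists_adj_adj_not_adj_ne hp (hG.one_lt_dist_of_ne_of_not_adj hne hnadj)

variable [Fintype V] [DecidableRel G.Adj] {n k ℓ μ : ℕ}

theorem IsSRGWith.mu_pos_of_connected (h : G.IsSRGWith n k ℓ μ) (hG : G.Connected)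
    (ht : G ≠ ⊤) : 0 < μ := by
  obtain ⟨x, a, b, hxa, hab, hxb, hne⟩ := hG.exists_adj_adj_not_adj_of_ne_top ht
  rw [← h.of_not_adj hne hxb]
  exact Fintype.card_pos_iff.mpr ⟨⟨a, hxa, hab.symm⟩⟩

theorem IsSRGWith.param_eq_int (h : G.IsSRGWith n k ℓ μ) (hb : G ≠ ⊥) :
    (k : ℤ) * (k - ℓ - 1) = (n - k - 1) * μ := by
  obtain ⟨a, b, hab⟩ := ne_bot_iff_exists_adj.mp hb
  have hℓk : ℓ < k := h.regular a ▸ h.of_adj a b hab ▸ hab.card_commonNeighbors_lt_degree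
  have hkn : k < n := h.card ▸ h.regular a ▸ G.degree_lt_card_verts a
  have hparam := h.param_eq G (by omega)
  zify [hℓk.le, show 1 ≤ k - ℓ by omega, hkn.le, show 1 ≤ n - k by omega] at hparam
  exact hparam

end SimpleGraph

section CliqueAdjacencyBound

theorem compl_mu_mul_mu_eq {R : Type*} [CommRing R] {v k l μ r s : R}
    (hparam : k * (k - l - 1) = (v - k - 1) * μ) (hsum : r + s = l - μ)
    (hprod : r * s = μ - k) :
    (v - 2 * k + l) * μ = r * s * (r + 1) * (s + 1) := by
  linear_combination -hparam - r * s * hsum + (k - l - 1 - r * s) * hprod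

theorem cliqueAdjPoly_mul_mu_eq {R : Type*} [CommRing R] {v k l μ r s n f : R}
    (hsum : r + s = l - μ) (hprod : r * s = μ - k) (hk : k = -s * (n + f))
    (hkey : (v - 2 * k + l) * μ = r * s * (r + 1) * (s + 1)) :
    cliqueAdjPoly v k l (n - r) (n + 1) * μ =
      s * (r * (r + 1) * f * (r - n - f - (1 - f) * (s + 1))) := by
  obtain rfl : μ = k + r * s := by linear_combination -hprod
  obtain rfl : l = k + r * s + r + s := by linear_combination -hsum
  subst hk
  unfold cliqueAdjPoly
  linear_combination (n - r) * (n - r + 1) * hkey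

variable {K : Type*} [Field K] [LinearOrder K] [IsStrictOrderedRing K] {v k l μ r s n f : K}

theorem cliqueAdjPoly_neg (hparam : k * (k - l - 1) = (v - k - 1) * μ)
    (hsum : r + s = l - μ) (hprod : r * s = μ - k) (hk : k = -s * (n + f)) (hs : s < 0)
    (hr : 0 ≤ r * (r + 1)) (hμ : 0 < μ) (hM : 0 < v - 2 * k + l) (hf0 : 0 < f)
    (hf : f < 1 - (r ^ 2 + r) / (v - 2 * k + l)) :
    cliqueAdjPoly v k l (n - r) (n + 1) < 0 := by
  have hkey := compl_mu_mul_mu_eq hparam hsum hprod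
  have hpos : 0 < r * (r + 1) * (s * (s + 1)) := by
    calc 0 < (v - 2 * k + l) * μ := mul_pos hM hμ
      _ = _ := by rw [hkey]; ring
  have hr0 : 0 < r * (r + 1) := hr.lt_of_ne (left_ne_zero_of_mul hpos.ne').symm
  have hs1 : s + 1 < 0 := neg_of_mul_pos_right (pos_of_mul_pos_right hpos hr0.le) hs.le
  have hMq : (v - 2 * k + l) * (n + f - r) = r * (r + 1) * (-s - 1) :=
    mul_left_cancel₀ hs.ne (by linear_combination -hkey - (v - 2 * k + l) * hprod +
      (v - 2 * k + l) * hk)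
  have hrM : r * (r + 1) < (1 - f) * (v - 2 * k + l) :=
    (div_lt_iff₀ hM).mp (by linear_combination hf)
  have hq : n + f - r < (1 - f) * (-s - 1) := by
    refine lt_of_mul_lt_mul_left ?_ hM.le
    calc (v - 2 * k + l) * (n + f - r) = r * (r + 1) * (-s - 1) := hMq
      _ < (1 - f) * (v - 2 * k + l) * (-s - 1) := mul_lt_mul_of_pos_right hrM (by linarith)
      _ = _ := by ring
  have hneg : cliqueAdjPoly v k l (n - r) (n + 1) * μ < 0 := by
    rw [cliqueAdjPoly_mul_mu_eq hsum hprod hk hkey]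
    exact mul_neg_of_neg_of_pos hs (mul_pos (mul_pos hr0 hf0) (by linarith))
  exact neg_of_mul_neg_left hneg hμ.le

end CliqueAdjacencyBound

theorem stmt_14_general {V : Type*} [Fintype V] [DecidableEq V] (G : SimpleGraph V) [DecidableRel G.Adj]
    (v k lam μ : ℕ) (hsrg : G.IsSRGWith v k lam μ)
    (hedge : G ≠ ⊥)
    (hcoconn : Gᶜ.Connected)
    (r s : ℤ) (hs : s < 0)
    (hsum : r + s = (lam : ℤ) - μ) (hprod : r * s = (μ : ℤ) - k)
    (hfrac1 : 0 < Int.fract (-(k : ℝ) / s))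
    (hfrac2 : Int.fract (-(k : ℝ) / s) <
      1 - ((r : ℝ) ^ 2 + r) / ((v : ℝ) - 2 * k + lam)) :
    cliqueAdjPolyInt v k lam ⌊-(μ : ℝ) / s⌋ ⌊1 - (k : ℝ) / s⌋ < 0 := by
  have hM : (0 : ℝ) < v - 2 * k + lam := by
    have := hsrg.compl.mu_pos_of_connected hcoconn (compl_eq_top.not.mpr hedge)
    exact_mod_cast (show (0 : ℤ) < v - 2 * k + lam by omega)
  have hsR : (s : ℝ) ≠ 0 := by exact_mod_cast hs.ne
  have hμk : -(μ : ℝ) / s = -(k : ℝ) / s - r := by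
    rw [show (μ : ℝ) = k + r * s by exact_mod_cast (by linarith : (μ : ℤ) = k + r * s)]
    field_simp
    ring
  have hμ : 0 < μ := Nat.pos_of_ne_zero fun h0 ↦ hfrac1.ne' <| by
    rw [show -(k : ℝ) / s = r by simp [h0] at hμk; linarith, Int.fract_intCast]
  have hk : (k : ℝ) = -s * (⌊-(k : ℝ) / s⌋ + Int.fract (-(k : ℝ) / s)) := by
    rw [Int.floor_add_fract]
    field_simp
  have hr : (0 : ℤ) ≤ r * (r + 1) := by rcases le_or_gt 0 r with h | h <;> nlinarith
  rw [hμk, Int.floor_sub_intCast, show 1 - (k : ℝ) / s = -k / s + 1 by ring, Int.floor_add_one]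
  have key := cliqueAdjPoly_neg (K := ℝ) (v := v) (k := k) (l := lam) (μ := μ) (r := r) (s := s)
    (by exact_mod_cast hsrg.param_eq_int hedge) (by exact_mod_cast hsum) (by exact_mod_cast hprod)
    hk (by exact_mod_cast hs) (by exact_mod_cast hr) (by exact_mod_cast hμ) hM hfrac1 hfrac2
  rw [← Int.cast_lt_zero (R := ℝ), Int.cast_cliqueAdjPolyInt]
  push_cast
  exact key

/-- Corollary `cor:beatDel01` for co-connected type-II strongly
regular graphs. -/
theorem stmt_14 {V : Type*} [Fintype V] [DecidableEq V] (G : SimpleGraph V) [DecidableRel G.Adj]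
    (v k lam μ : ℕ) (hsrg : G.IsSRGWith v k lam μ)
    (hnoncomplete : G ≠ ⊤) (hedge : G ≠ ⊥)
    (hcoconn : Gᶜ.Connected)
    (r s : ℤ) (hrs : s ≤ r) (hs : s < 0)
    (hsum : r + s = (lam : ℤ) - μ) (hprod : r * s = (μ : ℤ) - k)
    (hfrac1 : 0 < Int.fract (-(k : ℝ) / s))
    (hfrac2 : Int.fract (-(k : ℝ) / s) <
      1 - ((r : ℝ) ^ 2 + r) / ((v : ℝ) - 2 * k + lam)) :
    cliqueAdjPolyInt v k lam ⌊-(μ : ℝ) / s⌋ ⌊1 - (k : ℝ) / s⌋ < 0 :=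
  stmt_14_general G v k lam μ hsrg hedge hcoconn r s hs hsum hprod hfrac1 hfrac2
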